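/- arXiv:1803.04060 — 2 statements merged into one kernel-verified Lean document; each statement's English description precedes it below -/
import Mathlib

section
/- Let B = [[2,1],[1,2]] and let g be any permutation of the six edges of the directed graph of B that induces the exchange of the two vertices (g maps the two loops at vertex 1 bijectively to the two loops at vertex 2 and vice versa, and swaps the edge from vertex 1 to vertex 2 with the edge from vertex 2 to vertex 1) and satisfies g∘g = id. Then the map φ: X_B → X_B defined by φ(x)_i = g(x_i) is an automorphism of (X_B, σ_B) of order two, and φ is not inert. -/
open Matrix Set Filter

/-- The edge set of the directed graph with adjacency matrix `A`:
`A i j` edges from vertex `i` to vertex `j`. -/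
def Edges {k : ℕ} (A : Matrix (Fin k) (Fin k) ℕ) : Type := Σ i j : Fin k, Fin (A i j)

namespace Edges

variable {k : ℕ} {A : Matrix (Fin k) (Fin k) ℕ}

/-- initial vertex of an edge -/
def src (e : Edges A) : Fin k := e.1

/-- terminal vertex of an edge -/
def tgt (e : Edges A) : Fin k := e.2.1

instance : UniformSpace (Edges A) := ⊥

instance : Fintype (Edges A) := @Sigma.instFintype _ _ (fun _ => inferInstance) _

end Edges

/-- The edge shift space `X_A`: bi-infinite edge paths. -/
def SFT {k : ℕ} (A : Matrix (Fin k) (Fin k) ℕ) : Set (ℤ → Edges A) :=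
  {x | ∀ i : ℤ, (x i).tgt = (x (i + 1)).src}

/-- The shift map `σ_A` on `X_A`. -/
def shiftMap {k : ℕ} (A : Matrix (Fin k) (Fin k) ℕ) : ↥(SFT A) → ↥(SFT A) :=
  fun x => ⟨fun i => x.1 (i + 1), fun i => x.2 (i + 1)⟩

/-- The inverse shift map `σ_A⁻¹` on `X_A`. -/
def shiftInv {k : ℕ} (A : Matrix (Fin k) (Fin k) ℕ) : ↥(SFT A) → ↥(SFT A) :=
  fun x => ⟨fun i => x.1 (i - 1), fun i => by
    have h := x.2 (i - 1)
    simpa [sub_add_cancel, add_sub_cancel_right] using h⟩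

/-- `A` is irreducible: for all `I J` there is `n ≥ 1` with `(A^n) I J > 0`. -/
def IrreducibleMatrix {k : ℕ} (A : Matrix (Fin k) (Fin k) ℕ) : Prop :=
  ∀ I J : Fin k, ∃ n : ℕ, 1 ≤ n ∧ 0 < (A ^ n) I J

/-- `A` is primitive: some power of `A` has all entries strictly positive. -/
def PrimitiveMatrix {k : ℕ} (A : Matrix (Fin k) (Fin k) ℕ) : Prop :=
  ∃ n : ℕ, 1 ≤ n ∧ ∀ I J : Fin k, 0 < (A ^ n) I J

/-- `φ` together with its inverse `ψ` is an automorphism of the system `(α, T)`: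
a homeomorphism commuting with `T`. -/
def IsAutPair {α : Type*} [TopologicalSpace α] (T φ ψ : α → α) : Prop :=
  Continuous φ ∧ Continuous ψ ∧ Function.LeftInverse ψ φ ∧ Function.RightInverse ψ φ ∧
    φ ∘ T = T ∘ φ

section Coding

variable {E : Type*} {X : Set (ℤ → E)}

/-- `S` `φ`-codes `T`. -/
def Codes (φ : ↥X → ↥X) (S T : Set ℤ) : Prop :=
  ∀ x y : ↥X, (∀ i ∈ S, (x : ℤ → E) i = (y : ℤ → E) i) →
    ∀ j ∈ T, (φ x : ℤ → E) j = (φ y : ℤ → E) j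

/-- `W⁻(n, φ) = sup {m : (-∞,0] φⁿ-codes (-∞,m]}`. -/
noncomputable def Wminus (φ : ↥X → ↥X) (n : ℕ) : ℤ :=
  sSup {m : ℤ | Codes (φ^[n]) (Set.Iic 0) (Set.Iic m)}

/-- `W⁺(n, φ) = inf {m : [0,∞) φⁿ-codes [m,∞)}`. -/
noncomputable def Wplus (φ : ↥X → ↥X) (n : ℕ) : ℤ :=
  sInf {m : ℤ | Codes (φ^[n]) (Set.Ici 0) (Set.Ici m)}

end Coding

section Dimension

variable {k : ℕ} (A : Matrix (Fin k) (Fin k) ℕ)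

/-- `A` as a matrix over `ℚ`. -/
def Aq : Matrix (Fin k) (Fin k) ℚ := A.map (Nat.cast : ℕ → ℚ)

/-- The eventual range `R(A) = ℚ^k · A^k` (row vectors). -/
noncomputable def evRange : Submodule ℚ (Fin k → ℚ) :=
  LinearMap.range (Matrix.vecMulLinear (Aq A ^ k))

lemma evRange_mapsTo :
    ∀ x ∈ evRange A, Matrix.vecMulLinear (Aq A) x ∈ evRange A := by
  rintro x ⟨y, rfl⟩
  exact ⟨Matrix.vecMulLinear (Aq A) y, by
    simp [Matrix.vecMulLinear_apply, Matrix.vecMul_vecMul, ← pow_succ, ← pow_succ']⟩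

/-- `δ_A`, the restriction of (right multiplication by) `A` to `R(A)`. -/
noncomputable def deltaA : ↥(evRange A) →ₗ[ℚ] ↥(evRange A) :=
  LinearMap.restrict (Matrix.vecMulLinear (Aq A)) (evRange_mapsTo A)

/-- The `m`-ray `R(x, m)` determined by a point `x ∈ X_A`. -/
def ray (x : ↥(SFT A)) (m : ℤ) : Set ↥(SFT A) :=
  {y | ∀ i : ℤ, i ≤ m → (y : ℤ → Edges A) i = (x : ℤ → Edges A) i}

/-- `U` is an `m`-beam: a finite union of `m`-rays. -/
def IsBeam (U : Set ↥(SFT A)) (m : ℤ) : Prop :=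
  ∃ F : Finset ↥(SFT A), U = ⋃ x ∈ F, ray A x m

/-- The vector `v_{U,m}`: its `J`-th entry counts the distinct `m`-rays contained in the
`m`-beam `U` whose `m`-th edge ends at vertex `J`. -/
noncomputable def beamVec (U : Set ↥(SFT A)) (m : ℤ) : Fin k → ℚ := fun J =>
  (Nat.card {t : {i : ℤ // i ≤ m} → Edges A //
    (∃ y ∈ U, ∀ i : {i : ℤ // i ≤ m}, (y : ℤ → Edges A) i.1 = t i) ∧
      (t ⟨m, le_refl m⟩).tgt = J} : ℚ)

/-- `g = θ(U)`, i.e. `g ∈ R(A)` and `δ_A^{k+m} g = v_{U,m} · A^k` for some presentation of `U`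
as an `m`-beam. -/
def IsThetaVal (U : Set ↥(SFT A)) (g : Fin k → ℚ) : Prop :=
  g ∈ evRange A ∧ ∃ m : ℕ, IsBeam A U (m : ℤ) ∧
    g ᵥ* (Aq A ^ (k + m)) = beamVec A U (m : ℤ) ᵥ* (Aq A ^ k)

/-- `S` is the image of `φ` under the dimension representation: a linear automorphism of
`R(A)` commuting with `δ_A` and satisfying `S (θ U) = θ (φ '' U)` for every beam `U`. -/
def IsDimRep (φ : ↥(SFT A) → ↥(SFT A)) (S : ↥(evRange A) →ₗ[ℚ] ↥(evRange A)) : Prop :=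
  Function.Bijective S ∧ S ∘ₗ deltaA A = deltaA A ∘ₗ S ∧
    ∀ (U : Set ↥(SFT A)) (g h : Fin k → ℚ) (hg : IsThetaVal A U g)
      (hh : IsThetaVal A (φ '' U) h), S ⟨g, hg.1⟩ = ⟨h, hh.1⟩

/-- The set of eigenvalues of the complexification `S ⊗ 1` of a linear endomorphism `S`
of `R(A)`: the complex roots of the characteristic polynomial of `S`. -/
noncomputable def cSpectrum (S : ↥(evRange A) →ₗ[ℚ] ↥(evRange A)) : Set ℂ :=
  {z : ℂ | ((LinearMap.charpoly S).map (algebraMap ℚ ℂ)).IsRoot z}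

/-- The spectral radius of the complexification of `S`. -/
noncomputable def specRad (S : ↥(evRange A) →ₗ[ℚ] ↥(evRange A)) : ℝ :=
  sSup ((fun z : ℂ => ‖z‖) '' cSpectrum A S)

/-- The set of nonzero-spectrum eigenvalues of `A` over `ℂ` (roots of its characteristic
polynomial). -/
noncomputable def matSpectrum : Set ℂ :=
  {z : ℂ | (Matrix.charpoly (A.map (Nat.cast : ℕ → ℂ))).IsRoot z}

/-- The spectral radius `ρ(A)`. -/
noncomputable def rhoA : ℝ := sSup ((fun z : ℂ => ‖z‖) '' matSpectrum A)

/-- `ρ_A⁻ = |λ_s|⁻¹` where `λ_s` is a nonzero eigenvalue of `A` of minimal modulus: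
the spectral radius of `δ_A⁻¹ ⊗ 1`. -/
noncomputable def rhoAminus : ℝ :=
  sSup ((fun z => ‖z‖⁻¹) '' (matSpectrum A \ {0}))

/-- The number of admissible words of length `m` in `X_A` (with `P(0) = 1`);
for an integer argument `z`, the value is `P(max z 0)`. -/
noncomputable def wordCount (z : ℤ) : ℕ :=
  Nat.card {w : Fin z.toNat → Edges A //
    ∃ (x : ↥(SFT A)) (i : ℤ), ∀ j : Fin z.toNat, (x : ℤ → Edges A) (i + j) = w j}

end Dimension

/-!
`φ` is the one-block code of an involutive relabelling of the edges, hence a continuous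
involution commuting with the shift. Since `det B = 3 ≠ 0`, the eventual range is all of `ℚ²`,
and `θ` of a `0`-ray is the unit vector at the terminal vertex of its `0`-th edge. The `0`-ray of
the path looping at vertex `0` has `θ = e₀`, while its image, the `0`-ray of the path looping at
vertex `1`, has `θ = e₁`; so `S_φ` moves `e₀` and `φ` is not inert.
-/

section General

variable {k : ℕ} {A : Matrix (Fin k) (Fin k) ℕ}

instance : DiscreteTopology (Edges A) := ⟨UniformSpace.toTopologicalSpace_bot⟩

lemma evRange_eq_top_of_det_ne_zero (hA : (Aq A).det ≠ 0) : evRange A = ⊤ := by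
  refine LinearMap.range_eq_top.mpr fun v => ⟨v ᵥ* (Aq A ^ k)⁻¹, ?_⟩
  have hunit : IsUnit (Aq A ^ k).det := by
    rw [Matrix.det_pow]
    exact (isUnit_iff_ne_zero.mpr hA).pow k
  rw [Matrix.vecMulLinear_apply, Matrix.vecMul_vecMul, Matrix.nonsing_inv_mul _ hunit,
    Matrix.vecMul_one]

lemma exists_restrict_ray_iff (x : ↥(SFT A)) (m : ℤ) (t : {i : ℤ // i ≤ m} → Edges A) :
    (∃ y ∈ ray A x m, ∀ i : {i : ℤ // i ≤ m}, (y : ℤ → Edges A) i.1 = t i) ↔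
      t = fun i => (x : ℤ → Edges A) i.1 := by
  constructor
  · rintro ⟨y, hy, hyt⟩
    funext i
    rw [← hyt i, hy i.1 i.2]
  · rintro rfl
    exact ⟨x, fun _ _ => rfl, fun _ => rfl⟩

lemma beamVec_ray (x : ↥(SFT A)) (m : ℤ) :
    beamVec A (ray A x m) m = Pi.single ((x : ℤ → Edges A) m).tgt 1 := by
  funext J
  have hcond : ∀ t : {i : ℤ // i ≤ m} → Edges A,
      ((t = fun i => (x : ℤ → Edges A) i.1) ∧ (t ⟨m, le_rfl⟩).tgt = J) ↔
        ((t = fun i => (x : ℤ → Edges A) i.1) ∧ ((x : ℤ → Edges A) m).tgt = J) := by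
    intro t
    exact and_congr_right fun ht => by rw [ht]
  simp only [beamVec, exists_restrict_ray_iff, hcond]
  by_cases hJ : ((x : ℤ → Edges A) m).tgt = J
  · subst hJ
    simp
  · simp [hJ, Ne.symm hJ]

lemma isThetaVal_ray_zero (x : ↥(SFT A))
    (hx : Pi.single ((x : ℤ → Edges A) 0).tgt 1 ∈ evRange A) :
    IsThetaVal A (ray A x 0) (Pi.single ((x : ℤ → Edges A) 0).tgt 1) := by
  refine ⟨hx, 0, ⟨{x}, by simp⟩, ?_⟩
  rw [Nat.cast_zero, beamVec_ray, add_zero]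

lemma IsDimRep.ne_id_of_image_ray (hA : evRange A = ⊤) {φ : ↥(SFT A) → ↥(SFT A)}
    {S : ↥(evRange A) →ₗ[ℚ] ↥(evRange A)} (hS : IsDimRep A φ S) (x : ↥(SFT A))
    (himg : φ '' ray A x 0 = ray A (φ x) 0)
    (htgt : ((φ x : ℤ → Edges A) 0).tgt ≠ ((x : ℤ → Edges A) 0).tgt) :
    S ≠ LinearMap.id := by
  intro hid
  have hθ := hS.2.2 _ _ _ (isThetaVal_ray_zero x (hA ▸ Submodule.mem_top))
    (himg ▸ isThetaVal_ray_zero (φ x) (hA ▸ Submodule.mem_top))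
  rw [hid, LinearMap.id_apply, Subtype.mk.injEq] at hθ
  simpa [Pi.single_apply, htgt] using congrFun hθ ((x : ℤ → Edges A) 0).tgt

def constPath (e : Edges A) (he : e.tgt = e.src) : ↥(SFT A) := ⟨fun _ => e, fun _ => he⟩

def IsOneBlockMap (g : Edges A → Edges A) (φ : ↥(SFT A) → ↥(SFT A)) : Prop :=
  ∀ (x : ↥(SFT A)) (i : ℤ), (φ x : ℤ → Edges A) i = g ((x : ℤ → Edges A) i)

lemma exists_isOneBlockMap {g : Edges A → Edges A} (τ : Fin k → Fin k)
    (hsrc : ∀ e, (g e).src = τ e.src) (htgt : ∀ e, (g e).tgt = τ e.tgt) :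
    ∃ φ, IsOneBlockMap g φ :=
  ⟨fun x => ⟨fun i => g ((x : ℤ → Edges A) i), fun i => by rw [hsrc, htgt, x.2 i]⟩,
    fun _ _ => rfl⟩

namespace IsOneBlockMap

variable {g : Edges A → Edges A} {φ : ↥(SFT A) → ↥(SFT A)}

lemma continuous (hφ : IsOneBlockMap g φ) : Continuous φ := by
  have hval : (fun x => (φ x : ℤ → Edges A)) =
      fun (x : ↥(SFT A)) i => g ((x : ℤ → Edges A) i) :=
    funext fun x => funext (hφ x)
  refine Continuous.subtype_mk ?_ fun x => (φ x).2
  rw [hval]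
  exact continuous_pi fun i =>
    continuous_of_discreteTopology.comp ((continuous_apply i).comp continuous_subtype_val)

lemma comp_shiftMap (hφ : IsOneBlockMap g φ) : φ ∘ shiftMap A = shiftMap A ∘ φ :=
  funext fun x => Subtype.ext <| funext fun i => (hφ _ i).trans (hφ x (i + 1)).symm

lemma involutive (hφ : IsOneBlockMap g φ) (hg : Function.Involutive g) :
    Function.Involutive φ :=
  fun x => Subtype.ext <| funext fun i => by rw [hφ, hφ, hg]

lemma ne_id (hφ : IsOneBlockMap g φ) {x : ↥(SFT A)} {i : ℤ}
    (hx : g ((x : ℤ → Edges A) i) ≠ (x : ℤ → Edges A) i) : φ ≠ id := by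
  rintro rfl
  exact hx (hφ x i).symm

lemma image_ray (hφ : IsOneBlockMap g φ) (hg : Function.Involutive g) (x : ↥(SFT A))
    (m : ℤ) : φ '' ray A x m = ray A (φ x) m := by
  ext y
  constructor
  · rintro ⟨z, hz, rfl⟩ i hi
    rw [hφ, hφ, hz i hi]
  · intro hy
    refine ⟨φ y, fun i hi => ?_, hφ.involutive hg y⟩
    rw [hφ, hy i hi, hφ, hg]

end IsOneBlockMap

end General

section MatrixB

local notation "𝔹" => (!![2, 1; 1, 2] : Matrix (Fin 2) (Fin 2) ℕ)

lemma evRange_matB_eq_top : evRange 𝔹 = ⊤ :=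
  evRange_eq_top_of_det_ne_zero (by simp [Aq, Matrix.det_fin_two]; norm_num)

def loopZeroB : Edges 𝔹 := ⟨0, 0, ⟨0, by decide⟩⟩

end MatrixB

/-- Let `B = [[2,1],[1,2]]` and let `g` be an involutive permutation of the six
edges of the graph of `B` inducing the exchange of the two vertices. Then the induced map
`φ(x)_i = g(x_i)` exists as a map of `X_B`, and any such map is an automorphism of
`(X_B, σ_B)` of order two which is not inert. -/
theorem stmt3 (g : Edges (!![2, 1; 1, 2] : Matrix (Fin 2) (Fin 2) ℕ) →
      Edges (!![2, 1; 1, 2] : Matrix (Fin 2) (Fin 2) ℕ))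
    (hg2 : Function.Involutive g)
    (hgsrc : ∀ e, (g e).src = Equiv.swap (0 : Fin 2) 1 e.src)
    (hgtgt : ∀ e, (g e).tgt = Equiv.swap (0 : Fin 2) 1 e.tgt) :
    (∃ φ : ↥(SFT (!![2, 1; 1, 2] : Matrix (Fin 2) (Fin 2) ℕ)) →
        ↥(SFT (!![2, 1; 1, 2] : Matrix (Fin 2) (Fin 2) ℕ)),
      ∀ (x : ↥(SFT (!![2, 1; 1, 2] : Matrix (Fin 2) (Fin 2) ℕ))) (i : ℤ),
        (φ x : ℤ → Edges (!![2, 1; 1, 2] : Matrix (Fin 2) (Fin 2) ℕ)) i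
          = g ((x : ℤ → Edges (!![2, 1; 1, 2] : Matrix (Fin 2) (Fin 2) ℕ)) i)) ∧
    ∀ φ : ↥(SFT (!![2, 1; 1, 2] : Matrix (Fin 2) (Fin 2) ℕ)) →
        ↥(SFT (!![2, 1; 1, 2] : Matrix (Fin 2) (Fin 2) ℕ)),
      (∀ (x : ↥(SFT (!![2, 1; 1, 2] : Matrix (Fin 2) (Fin 2) ℕ))) (i : ℤ),
        (φ x : ℤ → Edges (!![2, 1; 1, 2] : Matrix (Fin 2) (Fin 2) ℕ)) i
          = g ((x : ℤ → Edges (!![2, 1; 1, 2] : Matrix (Fin 2) (Fin 2) ℕ)) i)) →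
      IsAutPair (shiftMap (!![2, 1; 1, 2] : Matrix (Fin 2) (Fin 2) ℕ)) φ φ ∧
      Function.Involutive φ ∧ φ ≠ id ∧
      ∀ S, IsDimRep (!![2, 1; 1, 2] : Matrix (Fin 2) (Fin 2) ℕ) φ S → S ≠ LinearMap.id := by
  refine ⟨exists_isOneBlockMap _ hgsrc hgtgt, fun φ (hφ : IsOneBlockMap g φ) => ?_⟩
  have hinv := hφ.involutive hg2
  have hg_tgt : (g loopZeroB).tgt ≠ loopZeroB.tgt := by
    rw [hgtgt]
    decide
  refine ⟨⟨hφ.continuous, hφ.continuous, hinv, hinv, hφ.comp_shiftMap⟩, hinv,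
    hφ.ne_id (x := constPath loopZeroB rfl) (i := 0) fun h => hg_tgt (congrArg Edges.tgt h),
    fun S hS => hS.ne_id_of_image_ray evRange_matB_eq_top (constPath loopZeroB rfl)
      (hφ.image_ray hg2 _ 0) ?_⟩
  rw [hφ]
  exact hg_tgt
end

section
/- Let (X_5, σ) be the full shift on the 5-letter alphabet 𝒜 = {(a,b) : a,b ∈ {0,1}} ∪ {c}, and let μ be the uniform Bernoulli measure on X_5 (the shift-invariant product measure giving each symbol probability 1/5). Define φ: X_5 → X_5 as the sliding block code of range one given by: φ(x)_i = c if x_i = c; φ(x)_i = (a′,a) if x_{i−1} = c, x_i = (a,b), x_{i+1} = (a′,b′); φ(x)_i = (b′,b) if x_{i−1} = (a,b), x_i = (a′,b′), x_{i+1} = c; and φ(x)_i = (a″,b) if x_{i−1} = (a,b), x_i = (a′,b′), x_{i+1} = (a″,b″). Then: (1) φ is an automorphism of (X_5, σ), i.e. a homeomorphism commuting with σ; (2) for every n ≥ 1 and μ-almost every z ∈ X_5, the sequence k ↦ φ^k(z)_{[−n,n]} (k ≥ 0) of words of length 2n+1 is eventually periodic; and (3) h_top(φ) ≥ log 4. 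-/
open Filter Set

/-- The 5-letter alphabet `𝒜 = {(a,b) : a,b ∈ {0,1}} ∪ {c}`. -/
def Alph5 : Type := (Bool × Bool) ⊕ Unit

/-- The symbol `c`. -/
def csym : Alph5 := Sum.inr ()

instance : UniformSpace Alph5 := ⊥
instance : MeasurableSpace Alph5 := ⊤

/-- The full shift `σ` on `X_5 = 𝒜^ℤ`. -/
def shift5 : (ℤ → Alph5) → (ℤ → Alph5) := fun x i => x (i + 1)

/-!
On a block between two consecutive `c`'s, `φ` reads the top and bottom rows as one cycle of bits
and rotates it, so it is inverted by the opposite rotation, again a range-one code. Since `c` is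
fixed, the evolution of a window bounded by two `c`'s is a deterministic dynamics on a finite set,
hence eventually periodic; and for the uniform Bernoulli measure almost every point has `c`'s on
both sides of any window, since avoiding `c` on `M` sites has probability `(4/5)^M`. On points
without `c` the two rows are shifted in opposite directions, so any word over the four letters
`(a,b)` is read at coordinate `0` along some orbit; these orbits are `(n, U)`-separated for the
entourage `x₀ = y₀`, which gives `h_top(φ) ≥ log 4`.
-/

open MeasureTheory Dynamics
open scoped ENNReal Uniformity

section SlidingBlockCode

variable {α : Type*}

def slidingBlockCode (f : α × α × α → α) (x : ℤ → α) : ℤ → α :=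
  fun i => f (x (i - 1), x i, x (i + 1))

theorem continuous_slidingBlockCode [TopologicalSpace α] [DiscreteTopology α]
    (f : α × α × α → α) : Continuous (slidingBlockCode f) :=
  continuous_pi fun i => (continuous_of_discreteTopology (f := f)).comp <|
    (continuous_apply (i - 1)).prodMk ((continuous_apply i).prodMk (continuous_apply (i + 1)))

theorem slidingBlockCode_comp_shift (f : α × α × α → α) :
    slidingBlockCode f ∘ (fun x i => x (i + 1)) = (fun x i => x (i + 1)) ∘ slidingBlockCode f := by
  funext x i
  simp only [Function.comp_apply, slidingBlockCode, sub_add_cancel, add_sub_cancel_right]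

theorem slidingBlockCode_leftInverse {f g : α × α × α → α}
    (h : ∀ u v w s t, g (f (u, v, w), f (v, w, s), f (w, s, t)) = w) :
    Function.LeftInverse (slidingBlockCode g) (slidingBlockCode f) := by
  intro x
  funext i
  have := h (x (i - 1 - 1)) (x (i - 1)) (x i) (x (i + 1)) (x (i + 1 + 1))
  simpa only [slidingBlockCode, sub_add_cancel, add_sub_cancel_right] using this

variable {f : α × α × α → α} {c : α}

theorem slidingBlockCode_iterate_apply_of_eq (hc : ∀ u w, f (u, c, w) = c) {x : ℤ → α} {i : ℤ}
    (hx : x i = c) (k : ℕ) : (slidingBlockCode f)^[k] x i = c := by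
  induction k with
  | zero => exact hx
  | succ k ih => rw [Function.iterate_succ_apply', slidingBlockCode, ih, hc]

theorem eqOn_slidingBlockCode_of_eqOn_Icc (hc : ∀ u w, f (u, c, w) = c) {x y : ℤ → α} {q r : ℤ}
    (hq : x q = c) (hr : x r = c) (hxy : EqOn x y (Icc q r)) :
    EqOn (slidingBlockCode f x) (slidingBlockCode f y) (Icc q r) := by
  rintro i ⟨hqi, hir⟩
  have hyq : y q = c := hxy ⟨le_rfl, hqi.trans hir⟩ ▸ hq
  have hyr : y r = c := hxy ⟨hqi.trans hir, le_rfl⟩ ▸ hr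
  rcases hqi.eq_or_lt with rfl | hqi
  · simp only [slidingBlockCode, hq, hyq, hc]
  rcases hir.eq_or_lt with rfl | hir
  · simp only [slidingBlockCode, hr, hyr, hc]
  simp only [slidingBlockCode]
  rw [hxy ⟨by omega, by omega⟩, hxy ⟨hqi.le, hir.le⟩, hxy ⟨by omega, by omega⟩]

end SlidingBlockCode

theorem Function.exists_periodic_tail_of_finite {Z : Type*} [Finite Z] (u : ℕ → Z)
    (hu : ∀ k l, u k = u l → u (k + 1) = u (l + 1)) :
    ∃ N p : ℕ, 0 < p ∧ ∀ m, N ≤ m → u (m + p) = u m := by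
  obtain ⟨k, l, hkl, heq⟩ := Finite.exists_ne_map_eq_of_infinite u
  wlog hlt : k < l generalizing k l
  · exact this l k hkl.symm heq.symm (by omega)
  have shift : ∀ j, u (k + j) = u (l + j) := by
    intro j
    induction j with
    | zero => exact heq
    | succ j ih => exact hu _ _ ih
  refine ⟨k, l - k, by omega, fun m hm => ?_⟩
  have := (shift (m - k)).symm
  rwa [show l + (m - k) = m + (l - k) by omega, show k + (m - k) = m by omega] at this

section Walls

variable {α : Type*} [Finite α] {f : α × α × α → α} {c : α}

theorem exists_periodic_tail_slidingBlockCode_Icc (hc : ∀ u w, f (u, c, w) = c)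
    {z : ℤ → α} {q r : ℤ} (hq : z q = c) (hr : z r = c) :
    ∃ N p : ℕ, 0 < p ∧ ∀ m, N ≤ m →
      EqOn ((slidingBlockCode f)^[m + p] z) ((slidingBlockCode f)^[m] z) (Icc q r) := by
  let u : ℕ → Icc q r → α := fun k i => (slidingBlockCode f)^[k] z i
  have hu : ∀ k l, u k = u l → u (k + 1) = u (l + 1) := by
    intro k l hkl
    funext i
    simp only [u, Function.iterate_succ_apply']
    refine eqOn_slidingBlockCode_of_eqOn_Icc hc (slidingBlockCode_iterate_apply_of_eq hc hq k)
      (slidingBlockCode_iterate_apply_of_eq hc hr k) (fun j hj => ?_) i.2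
    exact congrFun hkl ⟨j, hj⟩
  obtain ⟨N, p, hp, hper⟩ := Function.exists_periodic_tail_of_finite u hu
  exact ⟨N, p, hp, fun m hm i hi => congrFun (hper m hm) ⟨i, hi⟩⟩

end Walls

section UniformBernoulli

variable {α : Type*} [Fintype α] [MeasurableSpace α]

def IsUniformBernoulli (μ : Measure (ℤ → α)) : Prop :=
  ∀ (s : Finset ℤ) (f : ℤ → α), μ {x | ∀ i ∈ s, x i = f i} = (Fintype.card α : ℝ≥0∞)⁻¹ ^ s.card

variable [DecidableEq α] {μ : Measure (ℤ → α)}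

theorem measure_forall_ne_le (hμ : IsUniformBernoulli μ) (c : α) (t : Finset ℤ) :
    μ {x | ∀ i ∈ t, x i ≠ c} ≤
      ((Fintype.card {a // a ≠ c} : ℝ≥0∞) / Fintype.card α) ^ t.card := by
  let word (g : t → {a // a ≠ c}) : ℤ → α := fun i => if h : i ∈ t then g ⟨i, h⟩ else c
  have cover : {x : ℤ → α | ∀ i ∈ t, x i ≠ c} ⊆ ⋃ g, {x | ∀ i ∈ t, x i = word g i} := by
    intro x hx
    exact mem_iUnion.2 ⟨fun i => ⟨x i, hx i i.2⟩, fun i hi => by simp [word, hi]⟩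
  calc μ {x | ∀ i ∈ t, x i ≠ c}
      ≤ ∑ g, μ {x | ∀ i ∈ t, x i = word g i} :=
        (measure_mono cover).trans (measure_iUnion_fintype_le _ _)
    _ = (Fintype.card {a // a ≠ c} : ℝ≥0∞) ^ t.card * (Fintype.card α : ℝ≥0∞)⁻¹ ^ t.card := by
      simp only [hμ t, Finset.sum_const, Finset.card_univ, Fintype.card_fun, Fintype.card_coe,
        nsmul_eq_mul, Nat.cast_pow]
    _ = _ := by rw [← mul_pow, div_eq_mul_inv]

theorem ae_exists_eq_of_infinite (hμ : IsUniformBernoulli μ) (c : α) {S : Set ℤ}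
    (hS : S.Infinite) : ∀ᵐ x ∂μ, ∃ i ∈ S, x i = c := by
  have hr : (Fintype.card {a // a ≠ c} : ℝ≥0∞) / Fintype.card α < 1 := by
    rw [ENNReal.div_lt_iff (Or.inl (by exact_mod_cast (Fintype.card_pos_iff.2 ⟨c⟩).ne')) (by simp),
      one_mul, Nat.cast_lt]
    exact Fintype.card_subtype_lt (not_not.2 rfl)
  have hbound : ∀ M : ℕ, μ {x | ∀ i ∈ S, x i ≠ c} ≤
      ((Fintype.card {a // a ≠ c} : ℝ≥0∞) / Fintype.card α) ^ M := by
    intro M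
    obtain ⟨t, htS, rfl⟩ := hS.exists_subset_card_eq M
    refine (measure_mono fun (x : ℤ → α) (hx : ∀ i ∈ S, x i ≠ c) i hi => hx i (htS hi)).trans ?_
    exact measure_forall_ne_le hμ c t
  rw [ae_iff]
  push Not
  exact le_antisymm (ge_of_tendsto' (ENNReal.tendsto_pow_atTop_nhds_zero_of_lt_one hr) hbound)
    bot_le

theorem ae_exists_periodic_tail_slidingBlockCode (hμ : IsUniformBernoulli μ)
    {f : α × α × α → α} {c : α} (hc : ∀ u w, f (u, c, w) = c) (n : ℕ) :
    ∀ᵐ z ∂μ, ∃ N p : ℕ, 0 < p ∧ ∀ m, N ≤ m → ∀ i : ℤ, |i| ≤ n →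
      (slidingBlockCode f)^[m + p] z i = (slidingBlockCode f)^[m] z i := by
  filter_upwards [ae_exists_eq_of_infinite hμ c (Iic_infinite (-n : ℤ)),
    ae_exists_eq_of_infinite hμ c (Ici_infinite (n : ℤ))] with z ⟨q, hq, hzq⟩ ⟨r, hr, hzr⟩
  obtain ⟨N, p, hp, hper⟩ := exists_periodic_tail_slidingBlockCode_Icc hc hzq hzr
  refine ⟨N, p, hp, fun m hm i hi => hper m hm ⟨?_, ?_⟩⟩
  · linarith [mem_Iic.1 hq, (abs_le.1 hi).1]
  · linarith [mem_Ici.1 hr, (abs_le.1 hi).2]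

end UniformBernoulli

namespace Dynamics

theorem isDynNetIn_of_injOn {X Y : Type*} {T : X → X} {F s : Set X} {n : ℕ} (π : X → Y)
    (hsF : s ⊆ F) (hinj : s.InjOn fun x (j : Fin n) => π (T^[j] x)) :
    IsDynNetIn T F {p | π p.1 = π p.2} n s := by
  refine ⟨hsF, fun x hx y hy hxy => disjoint_left.2 fun z hzx hzy => hxy (hinj hx hy ?_)⟩
  funext j
  exact ((mem_dynEntourage.1 hzx) j j.2).trans ((mem_dynEntourage.1 hzy) j j.2).symm

theorem log_le_coverEntropy_of_isDynNetIn {X : Type*} [UniformSpace X] {T : X → X} {F : Set X}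
    {U : SetRel X X} (hU : U ∈ 𝓤 X) {k : ℕ}
    (hnet : ∀ n, ∃ s : Finset X, IsDynNetIn T F U n s ∧ k ^ n ≤ s.card) :
    ENNReal.log k ≤ coverEntropy T F := by
  have hgrowth : ∀ n, (k : ℝ≥0∞) ^ n ≤ netMaxcard T F U n := by
    intro n
    obtain ⟨s, hs, hcard⟩ := hnet n
    have := (Nat.cast_le (α := ℕ∞).2 hcard).trans hs.card_le_netMaxcard
    exact_mod_cast ENat.toENNReal_le.2 this
  calc ENNReal.log k = ExpGrowth.expGrowthSup fun n => (k : ℝ≥0∞) ^ n :=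
        ExpGrowth.expGrowthSup_pow.symm
    _ ≤ netEntropyEntourage T F U := ExpGrowth.expGrowthSup_monotone hgrowth
    _ ≤ coverEntropy T F := netEntropyEntourage_le_coverEntropy T F hU

theorem log_card_le_coverEntropy_of_realizes {X Y β : Type*} [UniformSpace X] [Fintype β]
    {T : X → X} (π : X → Y) (hπ : {p : X × X | π p.1 = π p.2} ∈ 𝓤 X) (ρ : β → Y)
    (hρ : Function.Injective ρ)
    (hrealize : ∀ n (w : Fin n → β), ∃ x, ∀ j : Fin n, π (T^[j] x) = ρ (w j)) :
    ENNReal.log (Fintype.card β) ≤ coverEntropy T univ := by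
  classical
  choose x hx using hrealize
  refine log_le_coverEntropy_of_isDynNetIn hπ fun n => ?_
  have hitinerary : Function.Injective fun w (j : Fin n) => π (T^[j] (x n w)) :=
    fun w w' h => funext fun j => hρ <| by simpa only [hx] using congrFun h j
  have hinj : (Finset.univ.image (x n) : Set X).InjOn fun y (j : Fin n) => π (T^[j] y) := by
    intro y hy y' hy' h
    obtain ⟨w, -, rfl⟩ := Finset.mem_image.1 hy
    obtain ⟨w', -, rfl⟩ := Finset.mem_image.1 hy'
    exact congrArg (x n) (hitinerary h)
  refine ⟨_, isDynNetIn_of_injOn π (subset_univ _) hinj, ?_⟩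
  rw [Finset.card_image_of_injective _ (hitinerary.of_comp (f := fun y (j : Fin n) => π (T^[j] y))),
    Finset.card_univ, Fintype.card_fun, Fintype.card_fin]

end Dynamics

theorem mem_uniformity_pi_eval_eq {ι α : Type*} [UniformSpace α] [DiscreteUniformity α] (i : ι) :
    {p : (ι → α) × (ι → α) | p.1 i = p.2 i} ∈ 𝓤 (ι → α) :=
  Filter.mem_map.1 <| Pi.uniformContinuous_proj (fun _ => α) i <|
    DiscreteUniformity.relId_mem_uniformity α

instance : DecidableEq Alph5 := inferInstanceAs (DecidableEq ((Bool × Bool) ⊕ Unit))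
instance : Fintype Alph5 := inferInstanceAs (Fintype ((Bool × Bool) ⊕ Unit))
instance : DiscreteUniformity Alph5 := ⟨rfl⟩

namespace Alph5

/-- On a block `c (a₁,b₁) … (aₘ,bₘ) c` the top row moves one step left and the bottom row one
step right, the two rows being joined at the ends: the block's `2m` bits are rotated. -/
def phiRule : Alph5 × Alph5 × Alph5 → Alph5
  | (_, Sum.inr _, _) => csym
  | (Sum.inr _, Sum.inl (a, _), Sum.inl (a', _)) => Sum.inl (a', a)
  | (Sum.inr _, Sum.inl (a, b), Sum.inr _) => Sum.inl (b, a)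
  | (Sum.inl (_, b), Sum.inl (_, b'), Sum.inr _) => Sum.inl (b', b)
  | (Sum.inl (_, b), Sum.inl _, Sum.inl (a'', _)) => Sum.inl (a'', b)

def psiRule : Alph5 × Alph5 × Alph5 → Alph5
  | (_, Sum.inr _, _) => csym
  | (Sum.inr _, Sum.inl (_, b'), Sum.inl (_, b'')) => Sum.inl (b', b'')
  | (Sum.inr _, Sum.inl (a', b'), Sum.inr _) => Sum.inl (b', a')
  | (Sum.inl (a, _), Sum.inl (a', _), Sum.inr _) => Sum.inl (a, a')
  | (Sum.inl (a, _), Sum.inl _, Sum.inl (_, b'')) => Sum.inl (a, b'')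

theorem psiRule_phiRule (u v w s t : Alph5) :
    psiRule (phiRule (u, v, w), phiRule (v, w, s), phiRule (w, s, t)) = w := by
  revert u v w s t; decide

theorem phiRule_psiRule (u v w s t : Alph5) :
    phiRule (psiRule (u, v, w), psiRule (v, w, s), psiRule (w, s, t)) = w := by
  revert u v w s t; decide

theorem phiRule_csym (u w : Alph5) : phiRule (u, csym, w) = csym := rfl

def twoRow (top bot : ℤ → Bool) : ℤ → Alph5 := fun i => Sum.inl (top i, bot i)

theorem slidingBlockCode_phiRule_iterate_twoRow (top bot : ℤ → Bool) (k : ℕ) :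
    (slidingBlockCode phiRule)^[k] (twoRow top bot) =
      twoRow (fun i => top (i + k)) (fun i => bot (i - k)) := by
  induction k with
  | zero => simp
  | succ k ih =>
    rw [Function.iterate_succ_apply', ih]
    funext i
    simp only [slidingBlockCode, twoRow, phiRule, Nat.cast_succ]
    congr 3 <;> ring

/-- The word `w` is written rightwards on the top row and leftwards on the bottom row, so that
the two rows meet at coordinate `0` at time `j` in the letter `w j`. -/
noncomputable def wordPoint {n : ℕ} (w : Fin n → Bool × Bool) : ℤ → Alph5 :=
  twoRow (Function.extend (fun j : Fin n => (j : ℤ)) (fun j => (w j).1) fun _ => false)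
    (fun i => Function.extend (fun j : Fin n => (j : ℤ)) (fun j => (w j).2) (fun _ => false) (-i))

theorem slidingBlockCode_phiRule_iterate_wordPoint_zero {n : ℕ} (w : Fin n → Bool × Bool)
    (j : Fin n) : (slidingBlockCode phiRule)^[j] (wordPoint w) 0 = Sum.inl (w j) := by
  have hcast : Function.Injective fun j : Fin n => (j : ℤ) :=
    Nat.cast_injective.comp Fin.val_injective
  rw [wordPoint, slidingBlockCode_phiRule_iterate_twoRow]
  simp only [twoRow, zero_add, zero_sub, neg_neg]
  rw [hcast.extend_apply, hcast.extend_apply]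

theorem log_four_le_coverEntropy :
    (Real.log 4 : EReal) ≤ coverEntropy (slidingBlockCode phiRule) univ := by
  have := log_card_le_coverEntropy_of_realizes (T := slidingBlockCode phiRule) (fun x => x 0)
    (mem_uniformity_pi_eval_eq 0) Sum.inl Sum.inl_injective fun _ w =>
      ⟨wordPoint w, slidingBlockCode_phiRule_iterate_wordPoint_zero w⟩
  rwa [Fintype.card_prod, Fintype.card_bool, ENNReal.log_pos_real (by norm_num) (by norm_num)]
    at this

end Alph5

theorem stmt4_general (μ : MeasureTheory.Measure (ℤ → Alph5))
    (hbern : ∀ (s : Finset ℤ) (f : ℤ → Alph5),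
      μ {x : ℤ → Alph5 | ∀ i ∈ s, x i = f i} = (1 / 5 : ENNReal) ^ s.card) :
    ∃ φ : (ℤ → Alph5) → (ℤ → Alph5),
      -- φ is a sliding block code of range one
      (∃ f : Alph5 × Alph5 × Alph5 → Alph5, ∀ x i, φ x i = f (x (i - 1), x i, x (i + 1))) ∧
      -- rule 1 : φ(x)_i = c if x_i = c
      (∀ (x : ℤ → Alph5) (i : ℤ), x i = csym → φ x i = csym) ∧
      -- rule 2 : φ(x)_i = (a′,a) if x_{i−1} = c, x_i = (a,b), x_{i+1} = (a′,b′)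
      (∀ (x : ℤ → Alph5) (i : ℤ) (a b a' b' : Bool),
        x (i - 1) = csym → x i = Sum.inl (a, b) → x (i + 1) = Sum.inl (a', b') →
          φ x i = Sum.inl (a', a)) ∧
      -- rule 3 : φ(x)_i = (b′,b) if x_{i−1} = (a,b), x_i = (a′,b′), x_{i+1} = c
      (∀ (x : ℤ → Alph5) (i : ℤ) (a b a' b' : Bool),
        x (i - 1) = Sum.inl (a, b) → x i = Sum.inl (a', b') → x (i + 1) = csym →
          φ x i = Sum.inl (b', b)) ∧
      -- rule 4 : φ(x)_i = (a″,b) if x_{i−1} = (a,b), x_i = (a′,b′), x_{i+1} = (a″,b″)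
      (∀ (x : ℤ → Alph5) (i : ℤ) (a b a' b' a'' b'' : Bool),
        x (i - 1) = Sum.inl (a, b) → x i = Sum.inl (a', b') → x (i + 1) = Sum.inl (a'', b'') →
          φ x i = Sum.inl (a'', b)) ∧
      -- (1) φ is an automorphism of (X_5, σ): a homeomorphism commuting with the shift
      (Continuous φ ∧
        (∃ ψ : (ℤ → Alph5) → (ℤ → Alph5), Continuous ψ ∧
          Function.LeftInverse ψ φ ∧ Function.RightInverse ψ φ) ∧
        φ ∘ shift5 = shift5 ∘ φ) ∧
      -- (2) for every n ≥ 1 and μ-a.e. z, the itinerary k ↦ φ^k(z)_{[−n,n]} is eventually periodic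
      (∀ n : ℕ, 1 ≤ n → ∀ᵐ z ∂μ, ∃ N p : ℕ, 0 < p ∧
        ∀ m : ℕ, N ≤ m → ∀ i : ℤ, |i| ≤ (n : ℤ) → (φ^[m + p] z) i = (φ^[m] z) i) ∧
      -- (3) h_top(φ) ≥ log 4
      ((Real.log 4 : EReal) ≤ Dynamics.coverEntropy φ Set.univ) := by
  have hμ : IsUniformBernoulli μ := by
    intro s f
    rw [hbern, one_div]
    rfl
  refine ⟨slidingBlockCode Alph5.phiRule, ⟨Alph5.phiRule, fun _ _ => rfl⟩, ?_, ?_, ?_, ?_,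
    ⟨continuous_slidingBlockCode _, ⟨slidingBlockCode Alph5.psiRule, continuous_slidingBlockCode _,
      slidingBlockCode_leftInverse Alph5.psiRule_phiRule,
      slidingBlockCode_leftInverse Alph5.phiRule_psiRule⟩, slidingBlockCode_comp_shift _⟩,
    fun n _ => ae_exists_periodic_tail_slidingBlockCode hμ Alph5.phiRule_csym n,
    Alph5.log_four_le_coverEntropy⟩
  · intro x i hx
    rw [slidingBlockCode, hx, Alph5.phiRule_csym]
  · intro x i _ _ _ _ h₁ h₂ h₃
    rw [slidingBlockCode, h₁, h₂, h₃]
    rfl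
  · intro x i _ _ _ _ h₁ h₂ h₃
    rw [slidingBlockCode, h₁, h₂, h₃]
    rfl
  · intro x i _ _ _ _ _ _ h₁ h₂ h₃
    rw [slidingBlockCode, h₁, h₂, h₃]
    rfl

/-- On the full shift `(X_5, σ)` over the 5-letter alphabet
`{(a,b) : a,b ∈ {0,1}} ∪ {c}`, with `μ` the uniform Bernoulli measure, there is a range-one
sliding block code `φ` obeying the four displayed local rules which: (1) is an automorphism of
`(X_5, σ)`; (2) for every `n ≥ 1` and `μ`-a.e. `z`, has eventually periodic itinerary
`k ↦ φ^k(z)_{[-n,n]}`; and (3) satisfies `h_top(φ) ≥ log 4`. -/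
theorem stmt4 (μ : MeasureTheory.Measure (ℤ → Alph5)) (hprob : MeasureTheory.IsProbabilityMeasure μ)
    (hbern : ∀ (s : Finset ℤ) (f : ℤ → Alph5),
      μ {x : ℤ → Alph5 | ∀ i ∈ s, x i = f i} = (1 / 5 : ENNReal) ^ s.card) :
    ∃ φ : (ℤ → Alph5) → (ℤ → Alph5),
      -- φ is a sliding block code of range one
      (∃ f : Alph5 × Alph5 × Alph5 → Alph5, ∀ x i, φ x i = f (x (i - 1), x i, x (i + 1))) ∧
      -- rule 1 : φ(x)_i = c if x_i = c
      (∀ (x : ℤ → Alph5) (i : ℤ), x i = csym → φ x i = csym) ∧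
      -- rule 2 : φ(x)_i = (a′,a) if x_{i−1} = c, x_i = (a,b), x_{i+1} = (a′,b′)
      (∀ (x : ℤ → Alph5) (i : ℤ) (a b a' b' : Bool),
        x (i - 1) = csym → x i = Sum.inl (a, b) → x (i + 1) = Sum.inl (a', b') →
          φ x i = Sum.inl (a', a)) ∧
      -- rule 3 : φ(x)_i = (b′,b) if x_{i−1} = (a,b), x_i = (a′,b′), x_{i+1} = c
      (∀ (x : ℤ → Alph5) (i : ℤ) (a b a' b' : Bool),
        x (i - 1) = Sum.inl (a, b) → x i = Sum.inl (a', b') → x (i + 1) = csym →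
          φ x i = Sum.inl (b', b)) ∧
      -- rule 4 : φ(x)_i = (a″,b) if x_{i−1} = (a,b), x_i = (a′,b′), x_{i+1} = (a″,b″)
      (∀ (x : ℤ → Alph5) (i : ℤ) (a b a' b' a'' b'' : Bool),
        x (i - 1) = Sum.inl (a, b) → x i = Sum.inl (a', b') → x (i + 1) = Sum.inl (a'', b'') →
          φ x i = Sum.inl (a'', b)) ∧
      -- (1) φ is an automorphism of (X_5, σ): a homeomorphism commuting with the shift
      (Continuous φ ∧
        (∃ ψ : (ℤ → Alph5) → (ℤ → Alph5), Continuous ψ ∧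
          Function.LeftInverse ψ φ ∧ Function.RightInverse ψ φ) ∧
        φ ∘ shift5 = shift5 ∘ φ) ∧
      -- (2) for every n ≥ 1 and μ-a.e. z, the itinerary k ↦ φ^k(z)_{[−n,n]} is eventually periodic
      (∀ n : ℕ, 1 ≤ n → ∀ᵐ z ∂μ, ∃ N p : ℕ, 0 < p ∧
        ∀ m : ℕ, N ≤ m → ∀ i : ℤ, |i| ≤ (n : ℤ) → (φ^[m + p] z) i = (φ^[m] z) i) ∧
      -- (3) h_top(φ) ≥ log 4
      ((Real.log 4 : EReal) ≤ Dynamics.coverEntropy φ Set.univ) :=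
  stmt4_general μ hbern
end
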